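/- arXiv:2504.19404 — 5 statements merged into one kernel-verified Lean document; each statement's English description precedes it below -/
import Mathlib

section
/- Let D : ℕ → ℂ satisfy ∑_{n≥1} 1/|D(n)| < ∞, fix n₀ ≥ 1, and set λ = ∑_{n≥n₀} 1/D(n). For 1 ≤ m ≤ n define Φ(n,m) = ∑ 1/(D(j₁)D(j₂−j₁)⋯D(j_m−j_{m−1})), where the sum runs over 1 ≤ j₁ < ⋯ < j_m ≤ n with j_i − j_{i−1} ≥ n₀ for all 1 ≤ i ≤ m (with j₀ = 0). Then for each fixed m ≥ 1, Φ(n,m) → λ^m as n → ∞. -/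
/-!
Record an admissible index tuple `j` by its shifted gaps `g_i = j_i - j_{i-1} - n₀ ≥ 0`. This turns
`Φ(n, m)` into the sum of `∏ 1 / D(g_i + n₀)` over the finite set of `g ∈ ℕ^m` with
`∑ (g_i + n₀) ≤ n`. These sets exhaust `ℕ^m`, and over all of `ℕ^m` the sum converges absolutely
to `λ^m`, being the `m`-fold Cauchy product of `∑ 1 / D(k + n₀)` with itself.
-/

open Filter

/-- The previous index: `prev j i = j (i-1)` with the convention `j₀ = 0`. -/
def prevIdx {m : ℕ} (j : Fin m → ℕ) (i : Fin m) : ℕ :=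
  (Fin.cons 0 j : Fin (m + 1) → ℕ) (Fin.castSucc i)

/-- The multiple sum Φ(n,m) with gap condition n₀, for a complex sequence D. -/
noncomputable def PhiC (D : ℕ → ℂ) (n₀ n m : ℕ) : ℂ :=
  ∑ j ∈ (Fintype.piFinset (fun _ : Fin m => Finset.Icc 1 n)).filter
      (fun j => ∀ i : Fin m, prevIdx j i + n₀ ≤ j i),
    ∏ i : Fin m, 1 / D (j i - prevIdx j i)

open Finset

section ProdSeries

variable {ι R : Type*} [NormedCommRing R] {f : ι → R}

theorem summable_norm_prod_fin (hf : Summable (‖f ·‖)) (m : ℕ) :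
    Summable fun g : Fin m → ι => ‖∏ i, f (g i)‖ := by
  induction m with
  | zero => exact Summable.of_finite
  | succ m ih =>
    rw [← (Fin.consEquiv fun _ => ι).summable_iff]
    simpa [Function.comp_def, Fin.prod_univ_succ] using hf.mul_norm ih

theorem hasSum_prod_fin [CompleteSpace R] (hf : Summable (‖f ·‖)) (m : ℕ) :
    HasSum (fun g : Fin m → ι => ∏ i, f (g i)) ((∑' k, f k) ^ m) := by
  induction m with
  | zero => simp
  | succ m ih =>
    have hs := summable_mul_of_summable_norm hf (summable_norm_prod_fin hf m)
    have h := hf.of_norm.hasSum.mul ih hs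
    rw [← (Fin.consEquiv fun _ => ι).hasSum_iff, pow_succ']
    simpa [Function.comp_def, Fin.prod_univ_succ] using h

end ProdSeries

namespace Fin

theorem partialSum_last {M : Type*} [AddCommMonoid M] {n : ℕ} (f : Fin n → M) :
    partialSum f (last n) = ∑ i, f i := by
  rw [partialSum, val_last, List.take_of_length_le (by simp), List.sum_ofFn]

theorem monotone_partialSum {M : Type*} [AddMonoid M] [PartialOrder M] [CanonicallyOrderedAdd M]
    {n : ℕ} (f : Fin n → M) : Monotone (partialSum f) :=
  monotone_iff_le_succ.mpr fun i => by simp [partialSum_succ]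

end Fin

theorem prevIdx_tail {m : ℕ} {P : Fin (m + 1) → ℕ} (h0 : P 0 = 0) (i : Fin m) :
    prevIdx (Fin.tail P) i = P i.castSucc := by
  rw [prevIdx, ← h0, Fin.cons_self_tail]

theorem partialSum_sub_prevIdx {m : ℕ} {j : Fin m → ℕ} (hj : ∀ i, prevIdx j i ≤ j i) :
    Fin.partialSum (fun i => j i - prevIdx j i) = Fin.cons 0 j := by
  funext k
  induction k using Fin.induction with
  | zero => simp
  | succ i ih =>
    rw [Fin.partialSum_succ, ih, Fin.cons_succ]
    have : (Fin.cons 0 j : Fin (m + 1) → ℕ) i.castSucc = prevIdx j i := rfl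
    have := hj i
    omega

def gapTuples (n₀ n m : ℕ) : Finset (Fin m → ℕ) :=
  (Fintype.piFinset fun _ => range (n + 1)).filter fun g => ∑ i, (g i + n₀) ≤ n

theorem mem_gapTuples {n₀ n m : ℕ} {g : Fin m → ℕ} :
    g ∈ gapTuples n₀ n m ↔ ∑ i, (g i + n₀) ≤ n := by
  refine ⟨fun h => (mem_filter.mp h).2, fun h => mem_filter.mpr ⟨?_, h⟩⟩
  refine Fintype.mem_piFinset.mpr fun i => mem_range_succ_iff.mpr ?_
  calc g i ≤ g i + n₀ := Nat.le_add_right _ _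
    _ ≤ ∑ i, (g i + n₀) :=
      single_le_sum (f := fun i => g i + n₀) (fun _ _ => Nat.zero_le _) (mem_univ i)
    _ ≤ n := h

theorem tendsto_gapTuples {n₀ m : ℕ} : Tendsto (gapTuples n₀ · m) atTop atTop :=
  tendsto_atTop_finset_of_monotone (fun _ _ hab _ hg => mem_gapTuples.mpr
    ((mem_gapTuples.mp hg).trans hab)) fun _ => ⟨_, mem_gapTuples.mpr le_rfl⟩

def gaps (n₀ : ℕ) {m : ℕ} (j : Fin m → ℕ) (i : Fin m) : ℕ := j i - prevIdx j i - n₀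

def ofGaps (n₀ : ℕ) {m : ℕ} (g : Fin m → ℕ) : Fin m → ℕ :=
  Fin.tail (Fin.partialSum fun i => g i + n₀)

section Gaps

variable {n₀ n m : ℕ}

theorem ofGaps_eq_prevIdx_add (g : Fin m → ℕ) (i : Fin m) :
    ofGaps n₀ g i = prevIdx (ofGaps n₀ g) i + (g i + n₀) := by
  rw [ofGaps, prevIdx_tail (Fin.partialSum_zero _), Fin.tail, Fin.partialSum_succ]

theorem ofGaps_le {g : Fin m → ℕ} (hg : g ∈ gapTuples n₀ n m) (i : Fin m) : ofGaps n₀ g i ≤ n :=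
  (Fin.monotone_partialSum _ (Fin.le_last _)).trans
    ((Fin.partialSum_last _).trans_le (mem_gapTuples.mp hg))

theorem gaps_ofGaps (g : Fin m → ℕ) : gaps n₀ (ofGaps n₀ g) = g := by
  funext i
  have := ofGaps_eq_prevIdx_add (n₀ := n₀) g i
  rw [gaps]
  omega

theorem partialSum_gaps {j : Fin m → ℕ} (hj : ∀ i, prevIdx j i + n₀ ≤ j i) :
    Fin.partialSum (fun i => gaps n₀ j i + n₀) = Fin.cons 0 j := by
  have hgap : (fun i => gaps n₀ j i + n₀) = fun i => j i - prevIdx j i :=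
    funext fun i => by have := hj i; rw [gaps]; omega
  rw [hgap, partialSum_sub_prevIdx fun i => (Nat.le_add_right _ _).trans (hj i)]

theorem ofGaps_gaps {j : Fin m → ℕ} (hj : ∀ i, prevIdx j i + n₀ ≤ j i) :
    ofGaps n₀ (gaps n₀ j) = j := by
  rw [ofGaps, partialSum_gaps hj]
  rfl

theorem gaps_mem_gapTuples {j : Fin m → ℕ} (hjn : ∀ i, j i ≤ n)
    (hj : ∀ i, prevIdx j i + n₀ ≤ j i) : gaps n₀ j ∈ gapTuples n₀ n m := by
  have hcons : ∀ k, (Fin.cons 0 j : Fin (m + 1) → ℕ) k ≤ n := Fin.cases (Nat.zero_le n) hjn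
  rw [mem_gapTuples, ← Fin.partialSum_last, partialSum_gaps hj]
  exact hcons _

end Gaps

theorem PhiC_eq_sum_gapTuples (D : ℕ → ℂ) {n₀ : ℕ} (hn₀ : 1 ≤ n₀) (n m : ℕ) :
    PhiC D n₀ n m = ∑ g ∈ gapTuples n₀ n m, ∏ i, 1 / D (g i + n₀) := by
  refine sum_nbij' (gaps n₀) (ofGaps n₀) (fun j hj => ?_) (fun g hg => ?_)
    (fun j hj => ofGaps_gaps (mem_filter.mp hj).2) (fun g _ => gaps_ofGaps g) (fun j hj => ?_)
  · simp only [mem_filter, Fintype.mem_piFinset, mem_Icc] at hj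
    exact gaps_mem_gapTuples (fun i => (hj.1 i).2) hj.2
  · refine mem_filter.mpr ⟨Fintype.mem_piFinset.mpr fun i => mem_Icc.mpr ⟨?_, ofGaps_le hg i⟩,
      fun i => ?_⟩ <;>
    · have := ofGaps_eq_prevIdx_add (n₀ := n₀) g i
      omega
  · refine prod_congr rfl fun i _ => ?_
    have := (mem_filter.mp hj).2 i
    rw [gaps]
    congr 2
    omega

theorem stmt_2_general (D : ℕ → ℂ)
    (hsum : Summable (fun n : ℕ => 1 / ‖D (n + 1)‖))
    (n₀ : ℕ) (hn₀ : 1 ≤ n₀) (m : ℕ) :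
    Tendsto (fun n : ℕ => PhiC D n₀ n m) atTop
      (nhds ((∑' k : ℕ, 1 / D (k + n₀)) ^ m)) := by
  have hf : Summable fun k => ‖1 / D (k + n₀)‖ := by
    have := (summable_nat_add_iff (n₀ - 1)).mpr hsum
    simpa [norm_div, Nat.sub_add_cancel hn₀, add_assoc] using this
  simp_rw [PhiC_eq_sum_gapTuples D hn₀]
  exact (hasSum_prod_fin hf m).comp tendsto_gapTuples

theorem stmt_2 (D : ℕ → ℂ) (hD : ∀ n, 1 ≤ n → D n ≠ 0)
    (hsum : Summable (fun n : ℕ => 1 / ‖D (n + 1)‖))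
    (n₀ : ℕ) (hn₀ : 1 ≤ n₀) (m : ℕ) (hm : 1 ≤ m) :
    Tendsto (fun n : ℕ => PhiC D n₀ n m) atTop
      (nhds ((∑' k : ℕ, 1 / D (k + n₀)) ^ m)) :=
  stmt_2_general D hsum n₀ hn₀ m
end

section
/- Let D : ℕ → ℝ satisfy inf_{n≥1} D(n) > 0 and ∑_{n≥1} 1/D(n) = ∞, and set S(n) = ∑_{i=1}^n 1/D(i). Suppose S is regularly varying with index τ = 0, i.e., S(⌊xn⌋)/S(n) → 1 for every x > 0. Fix n₀ ≥ 1 and for m ≥ 1 let Φ(n,m) = ∑ 1/(D(j₁)D(j₂−j₁)⋯D(j_m−j_{m−1})) over 1 ≤ j₁ < ⋯ < j_m ≤ n with j_i − j_{i−1} ≥ n₀ (j₀ = 0). Then Φ(n,m)/S(n)^m → 1 as n → ∞, for every m ≥ 1. -/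
open Filter

/-- The previous index: `prev j i = j (i-1)` with the convention `j₀ = 0`. -/
def prevIdx4 {m : ℕ} (j : Fin m → ℕ) (i : Fin m) : ℕ :=
  (Fin.cons 0 j : Fin (m + 1) → ℕ) (Fin.castSucc i)

/-- The multiple sum Φ(n,m) with gap condition n₀, for a real sequence D. -/
noncomputable def PhiR (D : ℕ → ℝ) (n₀ n m : ℕ) : ℝ :=
  ∑ j ∈ (Fintype.piFinset (fun _ : Fin m => Finset.Icc 1 n)).filter
      (fun j => ∀ i : Fin m, prevIdx4 j i + n₀ ≤ j i),
    ∏ i : Fin m, 1 / D (j i - prevIdx4 j i)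

/-!
Substituting the gaps `dᵢ = jᵢ - jᵢ₋₁` turns `Φ(n,m)` into the sum of `∏ 1/D(dᵢ)` over the
vectors `d ∈ [n₀, n]^m` with `∑ dᵢ ≤ n`. That set lies between the cubes `[n₀, n/m]^m` and
`[n₀, n]^m`, so `(S(n/m) - S(n₀-1))^m ≤ Φ(n,m) ≤ S(n)^m`. Since `S → ∞`, and `S(n/m)/S(n) → 1` by
slow variation, both bounds are `S(n)^m (1 + o(1))`.
-/

open Finset

namespace Fin

variable {M : Type*} [AddCommMonoid M] {m : ℕ}

theorem sum_univ_eq_partialSum_last (d : Fin m → M) : ∑ i, d i = partialSum d (last m) := by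
  simp [partialSum, List.take_of_length_le, List.sum_ofFn]

theorem cons_zero_partialSum_succ (d : Fin m → M) :
    (cons 0 fun i => partialSum d i.succ : Fin (m + 1) → M) = partialSum d := by
  ext i
  cases i using Fin.cases <;> simp

variable [PartialOrder M] [CanonicallyOrderedAdd M]

theorem monotone_partialSum_s4 (d : Fin m → M) : Monotone (partialSum d) :=
  monotone_iff_le_succ.mpr fun i => by rw [partialSum_succ]; exact le_self_add

theorem partialSum_le_sum (d : Fin m → M) (i : Fin (m + 1)) : partialSum d i ≤ ∑ k, d k := by
  rw [sum_univ_eq_partialSum_last]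
  exact monotone_partialSum_s4 d (le_last i)

end Fin

theorem prevIdx4_partialSum_succ {m : ℕ} (d : Fin m → ℕ) (i : Fin m) :
    prevIdx4 (fun k => Fin.partialSum d k.succ) i = Fin.partialSum d i.castSucc := by
  rw [prevIdx4, Fin.cons_zero_partialSum_succ]

theorem partialSum_sub_prevIdx4 {m : ℕ} (j : Fin m → ℕ) (hj : ∀ i, prevIdx4 j i ≤ j i) :
    Fin.partialSum (fun i => j i - prevIdx4 j i) = Fin.cons 0 j := by
  ext i
  induction i using Fin.induction with
  | zero => simp
  | succ i ih =>
    rw [Fin.partialSum_succ, ih, Fin.cons_succ]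
    exact Nat.add_sub_cancel' (hj i)

def gapVectors (n₀ n m : ℕ) : Finset (Fin m → ℕ) :=
  (Fintype.piFinset fun _ => Icc n₀ n).filter fun d => ∑ i, d i ≤ n

theorem PhiR_eq_sum_gapVectors (D : ℕ → ℝ) {n₀ : ℕ} (hn₀ : 1 ≤ n₀) (n m : ℕ) :
    PhiR D n₀ n m = ∑ d ∈ gapVectors n₀ n m, ∏ i, 1 / D (d i) := by
  refine sum_nbij' (fun j i => j i - prevIdx4 j i) (fun d i => Fin.partialSum d i.succ)
    ?_ ?_ ?_ ?_ fun _ _ => rfl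
  · intro j hj
    simp only [gapVectors, mem_filter, Fintype.mem_piFinset, mem_Icc] at hj ⊢
    obtain ⟨hjn, hgap⟩ := hj
    have hle : ∀ i, prevIdx4 j i ≤ j i := fun i => Nat.le_of_add_right_le (hgap i)
    refine ⟨fun i => ⟨Nat.le_sub_of_add_le' (hgap i), (Nat.sub_le _ _).trans (hjn i).2⟩, ?_⟩
    rw [Fin.sum_univ_eq_partialSum_last, partialSum_sub_prevIdx4 j hle]
    cases m with
    | zero => exact Nat.zero_le n
    | succ m => exact (hjn _).2
  · intro d hd
    simp only [gapVectors, mem_filter, Fintype.mem_piFinset, mem_Icc] at hd ⊢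
    obtain ⟨hdn, hsum⟩ := hd
    refine ⟨fun i => ⟨?_, (Fin.partialSum_le_sum d _).trans hsum⟩, fun i => ?_⟩
    · rw [Fin.partialSum_succ]
      linarith [(hdn i).1]
    · rw [prevIdx4_partialSum_succ, Fin.partialSum_succ]
      exact Nat.add_le_add_left (hdn i).1 _
  · intro j hj
    have hle : ∀ i, prevIdx4 j i ≤ j i := fun i => Nat.le_of_add_right_le ((mem_filter.mp hj).2 i)
    ext i
    simp only [partialSum_sub_prevIdx4 j hle, Fin.cons_succ]
  · intro d _
    ext i
    show Fin.partialSum d i.succ - prevIdx4 _ i = d i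
    rw [prevIdx4_partialSum_succ, Fin.partialSum_succ, Nat.add_sub_cancel_left]

theorem sum_gapVectors_le_pow (f : ℕ → ℝ) {n₀ : ℕ} (hf : ∀ i ≥ n₀, 0 ≤ f i) (n m : ℕ) :
    ∑ d ∈ gapVectors n₀ n m, ∏ i, f (d i) ≤ (∑ i ∈ Icc n₀ n, f i) ^ m := by
  rw [sum_pow']
  refine sum_le_sum_of_subset_of_nonneg (filter_subset _ _) fun d hd _ => ?_
  rw [Fintype.mem_piFinset] at hd
  exact prod_nonneg fun i _ => hf _ (mem_Icc.mp (hd i)).1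

theorem piFinset_Icc_div_subset_gapVectors (n₀ n m : ℕ) :
    Fintype.piFinset (fun _ : Fin m => Icc n₀ (n / m)) ⊆ gapVectors n₀ n m := by
  intro d hd
  simp only [Fintype.mem_piFinset, mem_Icc] at hd
  simp only [gapVectors, mem_filter, Fintype.mem_piFinset, mem_Icc]
  refine ⟨fun i => ⟨(hd i).1, (hd i).2.trans (Nat.div_le_self n m)⟩, ?_⟩
  calc ∑ i, d i ≤ ∑ _i : Fin m, n / m := sum_le_sum fun i _ => (hd i).2
    _ = m * (n / m) := by simp
    _ ≤ n := Nat.mul_div_le n m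

theorem pow_le_sum_gapVectors (f : ℕ → ℝ) {n₀ : ℕ} (hf : ∀ i ≥ n₀, 0 ≤ f i) (n m : ℕ) :
    (∑ i ∈ Icc n₀ (n / m), f i) ^ m ≤ ∑ d ∈ gapVectors n₀ n m, ∏ i, f (d i) := by
  rw [sum_pow']
  refine sum_le_sum_of_subset_of_nonneg (piFinset_Icc_div_subset_gapVectors n₀ n m)
    fun d hd _ => ?_
  simp only [gapVectors, mem_filter, Fintype.mem_piFinset] at hd
  exact prod_nonneg fun i _ => hf _ (mem_Icc.mp (hd.1 i)).1

theorem PhiR_le_pow_sum {D : ℕ → ℝ} (hD : ∀ i ≥ 1, 0 ≤ D i) {n₀ : ℕ} (hn₀ : 1 ≤ n₀) (n m : ℕ) :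
    PhiR D n₀ n m ≤ (∑ i ∈ Icc 1 n, 1 / D i) ^ m := by
  have hD' : ∀ i ≥ 1, 0 ≤ 1 / D i := fun i hi => one_div_nonneg.mpr (hD i hi)
  rw [PhiR_eq_sum_gapVectors D hn₀]
  refine (sum_gapVectors_le_pow _ (fun i hi => hD' i (hn₀.trans hi)) n m).trans ?_
  refine pow_le_pow_left₀ (sum_nonneg fun i hi => hD' i (hn₀.trans (mem_Icc.mp hi).1)) ?_ m
  exact sum_le_sum_of_subset_of_nonneg (Icc_subset_Icc_left hn₀)
    fun i hi _ => hD' i (mem_Icc.mp hi).1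

theorem pow_sum_le_PhiR {D : ℕ → ℝ} {n₀ : ℕ} (hn₀ : 1 ≤ n₀) (hD : ∀ i ≥ n₀, 0 ≤ D i) (n m : ℕ) :
    (∑ i ∈ Icc n₀ (n / m), 1 / D i) ^ m ≤ PhiR D n₀ n m := by
  rw [PhiR_eq_sum_gapVectors D hn₀]
  exact pow_le_sum_gapVectors _ (fun i hi => one_div_nonneg.mpr (hD i hi)) n m

theorem sum_Icc_succ_eq_sub (f : ℕ → ℝ) {k n : ℕ} (hkn : k ≤ n) :
    ∑ i ∈ Icc (k + 1) n, f i = ∑ i ∈ Icc 1 n, f i - ∑ i ∈ Icc 1 k, f i := by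
  have hIcc (a : ℕ) : Icc 1 a = Ioc 0 a := Icc_add_one_left_eq_Ioc 0 a
  rw [Icc_add_one_left_eq_Ioc, hIcc, hIcc, eq_sub_iff_add_eq',
    sum_Ioc_consecutive f (Nat.zero_le k) hkn]

theorem tendsto_sum_Icc_one_atTop {f : ℕ → ℝ} (hf : ∀ i ≥ 1, 0 ≤ f i)
    (hdiv : ¬ Summable fun n => f (n + 1)) :
    Tendsto (fun n => ∑ i ∈ Icc 1 n, f i) atTop atTop := by
  refine ((not_summable_iff_tendsto_nat_atTop_of_nonneg fun i => hf (i + 1) le_add_self).mp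
    hdiv).congr fun n => ?_
  rw [← Ico_add_one_right_eq_Icc, sum_Ico_eq_sum_range]
  simp [add_comm]

theorem tendsto_div_div_self_of_slow {S : ℕ → ℝ}
    (hslow : ∀ x : ℝ, 0 < x → Tendsto (fun n : ℕ => S ⌊x * n⌋₊ / S n) atTop (nhds 1))
    {m : ℕ} (hm : 0 < m) :
    Tendsto (fun n => S (n / m) / S n) atTop (nhds 1) := by
  refine (hslow (m : ℝ)⁻¹ (by positivity)).congr fun n => ?_
  rw [inv_mul_eq_div, Nat.floor_div_natCast, Nat.floor_natCast]

theorem stmt_4 (D : ℕ → ℝ)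
    (hinf : ∃ c : ℝ, 0 < c ∧ ∀ n, 1 ≤ n → c ≤ D n)
    (hdiv : ¬ Summable (fun n : ℕ => 1 / D (n + 1)))
    (S : ℕ → ℝ) (hS : ∀ n, S n = ∑ i ∈ Finset.Icc 1 n, 1 / D i)
    (hslow : ∀ x : ℝ, 0 < x →
      Tendsto (fun n : ℕ => S ⌊x * n⌋₊ / S n) atTop (nhds 1))
    (n₀ : ℕ) (hn₀ : 1 ≤ n₀) (m : ℕ) (hm : 1 ≤ m) :
    Tendsto (fun n : ℕ => PhiR D n₀ n m / (S n) ^ m) atTop (nhds 1) := by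
  obtain ⟨c, hc, hcD⟩ := hinf
  have hD : ∀ i ≥ 1, 0 ≤ D i := fun i hi => hc.le.trans (hcD i hi)
  have hS_top : Tendsto S atTop atTop := by
    simpa only [← hS] using
      tendsto_sum_Icc_one_atTop (fun i hi => one_div_nonneg.mpr (hD i hi)) hdiv
  obtain ⟨k, rfl⟩ := Nat.exists_eq_add_of_le' hn₀
  have hlim : Tendsto (fun n => ((S (n / m) - S k) / S n) ^ m) atTop (nhds 1) := by
    simpa [sub_div] using
      ((tendsto_div_div_self_of_slow hslow hm).sub (tendsto_const_nhds.div_atTop hS_top)).pow m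
  have hupper : ∀ᶠ n in atTop, PhiR D (k + 1) n m / S n ^ m ≤ 1 := by
    filter_upwards [hS_top.eventually_gt_atTop 0] with n hn
    rw [div_le_one (by positivity), hS]
    exact PhiR_le_pow_sum hD hn₀ n m
  have hlower : ∀ᶠ n in atTop, ((S (n / m) - S k) / S n) ^ m ≤ PhiR D (k + 1) n m / S n ^ m := by
    filter_upwards [hS_top.eventually_gt_atTop 0, eventually_ge_atTop (m * k)] with n hn hkn
    have hk : k ≤ n / m := (Nat.le_div_iff_mul_le hm).mpr (by linarith)
    rw [div_pow, hS (n / m), hS k, ← sum_Icc_succ_eq_sub _ hk]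
    gcongr
    exact pow_sum_le_PhiR hn₀ (fun i hi => hD i (hn₀.trans hi)) n m
  exact tendsto_of_tendsto_of_tendsto_of_le_of_le' hlim tendsto_const_nhds hlower hupper
end

section
/- For τ ∈ (0,1), τ · ∫₀¹ x^{τ−1}(1−x)^τ dx = τ·Γ(τ+1)·Γ(τ)/Γ(2τ+1), and consequently lim_{l→∞} (1/l^{2τ}) ∑_{s=1}^{l} (s^τ − (s−1)^τ)(l − s + 1)^τ = τ·Γ(1+τ)·Γ(τ)/Γ(1+2τ). -/
/-!
Since `(k+1)^τ - k^τ = τ ∫_k^{k+1} t^(τ-1) dt` and `l - t ≤ l - k ≤ l + 1 - t` on `[k, k+1]`, the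
sum `∑_{k<l} ((k+1)^τ - k^τ) (l-k)^τ` lies between `τ ∫_0^l t^(τ-1) (l-t)^τ dt` and
`τ ∫_0^{l+1} t^(τ-1) (l+1-t)^τ dt`. Substituting `t = c x`, these integrals are
`c^(2τ) τ B(τ, τ+1)` with `c = l` and `c = l + 1`, and `((l+1)/l)^(2τ) → 1`.
-/

open Real Filter

open Complex in
lemma integral_rpow_mul_sub_rpow_eq_beta {a b c : ℝ} (ha : 0 < a) (hb : 0 < b) (hc : 0 < c) :
    ∫ x in (0 : ℝ)..c, x ^ (a - 1) * (c - x) ^ (b - 1)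
      = c ^ (a + b - 1) * ProbabilityTheory.beta a b := by
  have hcomplex : ((∫ x in (0 : ℝ)..c, x ^ (a - 1) * (c - x) ^ (b - 1) : ℝ) : ℂ)
      = ∫ x in (0 : ℝ)..c, (x : ℂ) ^ ((a : ℂ) - 1) * ((c : ℂ) - x) ^ ((b : ℂ) - 1) := by
    rw [← intervalIntegral.integral_ofReal]
    refine intervalIntegral.integral_congr fun x hx => ?_
    rw [Set.uIcc_of_le hc.le] at hx
    simp only [ofReal_mul]
    rw [ofReal_cpow hx.1, ofReal_cpow (sub_nonneg.2 hx.2)]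
    push_cast
    rfl
  have := betaIntegral_scaled a b hc
  rw [← hcomplex, betaIntegral_eq_Gamma_mul_div _ _ (by simpa) (by simpa), ← ofReal_add,
    Gamma_ofReal, Gamma_ofReal, Gamma_ofReal, ← ofReal_one, ← ofReal_sub,
    ← ofReal_cpow hc.le] at this
  rw [ProbabilityTheory.beta]
  exact_mod_cast this

lemma integral_zero_natCast_eq_sum {f : ℝ → ℝ}
    (hf : ∀ a b : ℝ, IntervalIntegrable f MeasureTheory.volume a b) (n : ℕ) :
    ∫ t in (0 : ℝ)..n, f t = ∑ k ∈ Finset.range n, ∫ t in (k : ℝ)..k + 1, f t := by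
  rw [← Nat.cast_zero, ← intervalIntegral.sum_integral_adjacent_intervals fun k _ => hf _ _]
  push_cast
  rfl

lemma tendsto_one_div_rpow_mul_of_le_of_le {p C : ℝ} {u : ℕ → ℝ}
    (hlow : ∀ n : ℕ, (n : ℝ) ^ p * C ≤ u n) (hup : ∀ n : ℕ, u n ≤ ((n : ℝ) + 1) ^ p * C) :
    Tendsto (fun n : ℕ => 1 / (n : ℝ) ^ p * u n) atTop (nhds C) := by
  have hratio : Tendsto (fun n : ℕ => C * (1 + 1 / (n : ℝ)) ^ p) atTop (nhds C) := by
    have := ((tendsto_const_nhds (x := (1 : ℝ))).add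
      tendsto_one_div_atTop_nhds_zero_nat).rpow_const (p := p) (Or.inl (by norm_num)) |>.const_mul C
    simpa using this
  refine tendsto_of_tendsto_of_tendsto_of_le_of_le' tendsto_const_nhds hratio ?_ ?_ <;>
    filter_upwards [eventually_gt_atTop 0] with n hn
  · have hpos : 0 < (n : ℝ) ^ p := rpow_pos_of_pos (by exact_mod_cast hn) p
    rw [one_div, inv_mul_eq_div, le_div_iff₀ hpos, mul_comm]
    exact hlow n
  · have hn' : (0 : ℝ) < n := by exact_mod_cast hn
    have hpos : 0 < (n : ℝ) ^ p := rpow_pos_of_pos hn' p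
    rw [one_div, inv_mul_eq_div, div_le_iff₀ hpos, one_add_div hn'.ne',
      div_rpow (by positivity) hn'.le]
    calc u n ≤ ((n : ℝ) + 1) ^ p * C := hup n
      _ = _ := by field_simp

lemma sum_Icc_rpow_sub_rpow_mul_eq_sum_range (τ : ℝ) (l : ℕ) :
    ∑ s ∈ Finset.Icc 1 l, ((s : ℝ) ^ τ - ((s : ℝ) - 1) ^ τ) * ((l : ℝ) - s + 1) ^ τ
      = ∑ k ∈ Finset.range l, (((k : ℝ) + 1) ^ τ - (k : ℝ) ^ τ) * ((l : ℝ) - k) ^ τ := by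
  rw [← Finset.Ico_add_one_right_eq_Icc, Finset.sum_Ico_eq_sum_range, Nat.add_sub_cancel]
  refine Finset.sum_congr rfl fun k _ => ?_
  push_cast
  ring_nf

section
variable {τ : ℝ}

lemma intervalIntegrable_rpow_mul_sub_rpow (hτ : 0 < τ) (c a b : ℝ) :
    IntervalIntegrable (fun t => t ^ (τ - 1) * (c - t) ^ τ) MeasureTheory.volume a b :=
  (intervalIntegral.intervalIntegrable_rpow' (by linarith)).mul_continuousOn
    ((continuous_const.sub continuous_id).rpow_const fun _ => Or.inr hτ.le).continuousOn

lemma rpow_add_one_sub_rpow_eq_integral (hτ : 0 < τ) (x : ℝ) :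
    (x + 1) ^ τ - x ^ τ = τ * ∫ t in x..x + 1, t ^ (τ - 1) := by
  rw [integral_rpow (Or.inl (by linarith)), sub_add_cancel, mul_div_cancel₀ _ hτ.ne']

lemma integral_le_rpow_add_one_sub_rpow_mul (hτ : 0 < τ) {x c : ℝ} (hx : 0 ≤ x) (hxc : x + 1 ≤ c) :
    τ * ∫ t in x..x + 1, t ^ (τ - 1) * (c - t) ^ τ ≤ ((x + 1) ^ τ - x ^ τ) * (c - x) ^ τ := by
  rw [rpow_add_one_sub_rpow_eq_integral hτ, mul_assoc, ← intervalIntegral.integral_mul_const]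
  refine mul_le_mul_of_nonneg_left (intervalIntegral.integral_mono_on (by linarith)
    (intervalIntegrable_rpow_mul_sub_rpow hτ _ _ _)
    ((intervalIntegral.intervalIntegrable_rpow' (by linarith)).mul_const _) fun t ht => ?_) hτ.le
  exact mul_le_mul_of_nonneg_left
    (rpow_le_rpow (by linarith [ht.2]) (by linarith [ht.1]) hτ.le) (rpow_nonneg (hx.trans ht.1) _)

lemma rpow_add_one_sub_rpow_mul_le_integral (hτ : 0 < τ) {x c : ℝ} (hx : 0 ≤ x) (hxc : x ≤ c) :
    ((x + 1) ^ τ - x ^ τ) * (c - x) ^ τ ≤ τ * ∫ t in x..x + 1, t ^ (τ - 1) * (c + 1 - t) ^ τ := by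
  rw [rpow_add_one_sub_rpow_eq_integral hτ, mul_assoc, ← intervalIntegral.integral_mul_const]
  refine mul_le_mul_of_nonneg_left (intervalIntegral.integral_mono_on (by linarith)
    ((intervalIntegral.intervalIntegrable_rpow' (by linarith)).mul_const _)
    (intervalIntegrable_rpow_mul_sub_rpow hτ _ _ _) fun t ht => ?_) hτ.le
  exact mul_le_mul_of_nonneg_left
    (rpow_le_rpow (by linarith [ht.1]) (by linarith [ht.2]) hτ.le) (rpow_nonneg (hx.trans ht.1) _)

lemma integral_rpow_sub_one_mul_sub_rpow_eq_beta (hτ : 0 < τ) {c : ℝ} (hc : 0 ≤ c) :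
    ∫ t in (0 : ℝ)..c, t ^ (τ - 1) * (c - t) ^ τ
      = c ^ (2 * τ) * ProbabilityTheory.beta τ (τ + 1) := by
  rcases hc.eq_or_lt with rfl | hc
  · simp [zero_rpow (by positivity : 2 * τ ≠ 0)]
  have := integral_rpow_mul_sub_rpow_eq_beta hτ (by linarith : 0 < τ + 1) hc
  rwa [add_sub_cancel_right, show τ + (τ + 1) - 1 = 2 * τ by ring] at this

lemma integral_le_sum_rpow_sub_rpow_mul (hτ : 0 < τ) (l : ℕ) :
    τ * ∫ t in (0 : ℝ)..l, t ^ (τ - 1) * (l - t) ^ τ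
      ≤ ∑ k ∈ Finset.range l, (((k : ℝ) + 1) ^ τ - (k : ℝ) ^ τ) * ((l : ℝ) - k) ^ τ := by
  rw [integral_zero_natCast_eq_sum (intervalIntegrable_rpow_mul_sub_rpow hτ _), Finset.mul_sum]
  refine Finset.sum_le_sum fun k hk => integral_le_rpow_add_one_sub_rpow_mul hτ k.cast_nonneg ?_
  exact_mod_cast Finset.mem_range.1 hk

lemma sum_rpow_sub_rpow_mul_le_integral (hτ : 0 < τ) (l : ℕ) :
    ∑ k ∈ Finset.range l, (((k : ℝ) + 1) ^ τ - (k : ℝ) ^ τ) * ((l : ℝ) - k) ^ τ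
      ≤ τ * ∫ t in (0 : ℝ)..l + 1, t ^ (τ - 1) * (l + 1 - t) ^ τ := by
  calc _ ≤ τ * ∫ t in (0 : ℝ)..l, t ^ (τ - 1) * (l + 1 - t) ^ τ := by
        rw [integral_zero_natCast_eq_sum (intervalIntegrable_rpow_mul_sub_rpow hτ _),
          Finset.mul_sum]
        refine Finset.sum_le_sum fun k hk =>
          rpow_add_one_sub_rpow_mul_le_integral hτ k.cast_nonneg ?_
        exact_mod_cast (Finset.mem_range.1 hk).le
    _ ≤ _ := by
        refine mul_le_mul_of_nonneg_left (intervalIntegral.integral_mono_interval le_rfl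
          l.cast_nonneg (by linarith) ?_ (intervalIntegrable_rpow_mul_sub_rpow hτ _ _ _)) hτ.le
        refine (MeasureTheory.ae_restrict_iff' measurableSet_Ioc).2
          (.of_forall fun t ht => ?_)
        exact mul_nonneg (rpow_nonneg ht.1.le _) (rpow_nonneg (by linarith [ht.2]) _)

end

theorem stmt_5 (τ : ℝ) (hτ : τ ∈ Set.Ioo (0 : ℝ) 1) :
    τ * ∫ x in (0:ℝ)..1, x ^ (τ - 1) * (1 - x) ^ τ
        = τ * Real.Gamma (τ + 1) * Real.Gamma τ / Real.Gamma (2 * τ + 1) ∧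
    Tendsto (fun l : ℕ =>
        (1 / (l : ℝ) ^ (2 * τ)) *
          ∑ s ∈ Finset.Icc 1 l, ((s : ℝ) ^ τ - ((s : ℝ) - 1) ^ τ) * ((l : ℝ) - s + 1) ^ τ)
      atTop (nhds (τ * Real.Gamma (1 + τ) * Real.Gamma τ / Real.Gamma (1 + 2 * τ))) := by
  have hτ0 := hτ.1
  have hbeta : τ * ProbabilityTheory.beta τ (τ + 1)
      = τ * Real.Gamma (τ + 1) * Real.Gamma τ / Real.Gamma (2 * τ + 1) := by
    rw [ProbabilityTheory.beta, show τ + (τ + 1) = 2 * τ + 1 by ring]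
    ring
  refine ⟨by rw [integral_rpow_sub_one_mul_sub_rpow_eq_beta hτ0 zero_le_one, one_rpow, one_mul,
    hbeta], ?_⟩
  rw [add_comm 1 τ, add_comm 1 (2 * τ), ← hbeta]
  simp_rw [sum_Icc_rpow_sub_rpow_mul_eq_sum_range]
  refine tendsto_one_div_rpow_mul_of_le_of_le (fun l => ?_) (fun l => ?_)
  · have := integral_le_sum_rpow_sub_rpow_mul hτ0 l
    rwa [integral_rpow_sub_one_mul_sub_rpow_eq_beta hτ0 l.cast_nonneg, mul_left_comm] at this
  · have := sum_rpow_sub_rpow_mul_le_integral hτ0 l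
    rwa [integral_rpow_sub_one_mul_sub_rpow_eq_beta hτ0 (by positivity), mul_left_comm] at this
end

section
/- Let ξ be a random variable taking values in ℕ (including 0) with geometric distribution P(ξ = i) = (1−p)^i · p for i ≥ 0, where p ∈ (0,1). Then for every integer k ≥ 1, E((ξ+1)^k)/E(ξ^k) = (1 + E ξ)/E ξ, and E ξ = (1−p)/p. -/
/-!
The hypothesis says nothing about measurability of `ξ`, but the outer measures of its fibres
already add up to `1 = ℙ univ`, and a set whose outer measure and that of its complement add up
to the total mass is null-measurable. Hence `ξ` has law `geometricMeasure p`. This law is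
memoryless: `E f(ξ) = (1 - p) E f(ξ + 1)` whenever `f 0 = 0`, so `E ξ^k = (1 - p) E (ξ + 1)^k`
for `k ≥ 1`, and with `E ξ = (1 - p) / p` both ratios equal `1 / (1 - p)`.
-/

open MeasureTheory

namespace MeasureTheory

theorem nullMeasurableSet_of_measure_add_measure_compl_le {Ω : Type*} [MeasurableSpace Ω]
    {μ : Measure Ω} [IsFiniteMeasure μ] {s : Set Ω} (h : μ s + μ sᶜ ≤ μ Set.univ) :
    NullMeasurableSet s μ := by
  set t := toMeasurable μ s
  have ht : MeasurableSet t := measurableSet_toMeasurable μ s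
  have hst : s ⊆ t := subset_toMeasurable μ s
  have hsplit : μ (t \ s) + μ tᶜ = μ sᶜ := by
    rw [← measure_inter_add_sdiff sᶜ ht, Set.sdiff_eq, Set.sdiff_eq, Set.inter_comm,
      Set.inter_eq_right.2 (Set.compl_subset_compl.2 hst)]
  have htot : μ s + μ tᶜ = μ Set.univ := by
    rw [← measure_toMeasurable s]
    exact measure_add_measure_compl ht
  have hnull : μ (t \ s) = 0 := by
    refine nonpos_iff_eq_zero.1 (ENNReal.le_of_add_le_add_right (measure_ne_top μ Set.univ) ?_)
    calc μ (t \ s) + μ Set.univ = μ s + (μ (t \ s) + μ tᶜ) := by rw [← htot]; ring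
      _ ≤ 0 + μ Set.univ := by rwa [hsplit, zero_add]
  exact ht.nullMeasurableSet.congr (ae_eq_set.2 ⟨by simp [Set.sdiff_eq_empty.2 hst], hnull⟩).symm

theorem aemeasurable_of_tsum_measure_fiber_le {Ω α : Type*} [MeasurableSpace Ω]
    [MeasurableSpace α] [Countable α] [MeasurableSingletonClass α] {μ : Measure Ω}
    [IsFiniteMeasure μ] {ξ : Ω → α} (h : ∑' a, μ (ξ ⁻¹' {a}) ≤ μ Set.univ) :
    AEMeasurable ξ μ := by
  refine NullMeasurable.aemeasurable fun s _ => ?_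
  rw [← Set.biUnion_preimage_singleton]
  refine .biUnion (Set.to_countable s) fun a _ => ?_
  refine nullMeasurableSet_of_measure_add_measure_compl_le (le_trans ?_ h)
  have hcompl : μ (ξ ⁻¹' {a})ᶜ ≤ ∑' b : ({a}ᶜ : Set α), μ (ξ ⁻¹' {(b : α)}) := by
    rw [← Set.preimage_compl, ← Set.biUnion_preimage_singleton]
    exact measure_biUnion_le μ (Set.to_countable _) _
  calc μ (ξ ⁻¹' {a}) + μ (ξ ⁻¹' {a})ᶜ
      ≤ ∑' b : ({a} : Set α), μ (ξ ⁻¹' {(b : α)})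
          + ∑' b : ({a}ᶜ : Set α), μ (ξ ⁻¹' {(b : α)}) := by
        rw [tsum_singleton a fun b => μ (ξ ⁻¹' {b})]
        gcongr
    _ = ∑' b, μ (ξ ⁻¹' {b}) :=
        ENNReal.summable.tsum_add_tsum_compl (s := {a}) (f := fun b => μ (ξ ⁻¹' {b}))
          ENNReal.summable

end MeasureTheory

namespace ProbabilityTheory

theorem hasLaw_of_measure_fiber_eq {Ω α : Type*} [MeasurableSpace Ω] [MeasurableSpace α]
    [Countable α] [MeasurableSingletonClass α] {μ : Measure Ω} [IsProbabilityMeasure μ]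
    {ν : Measure α} [IsProbabilityMeasure ν] {ξ : Ω → α} (h : ∀ a, μ (ξ ⁻¹' {a}) = ν {a}) :
    HasLaw ξ ν μ := by
  have hξ : AEMeasurable ξ μ := by
    refine aemeasurable_of_tsum_measure_fiber_le ?_
    simp_rw [h, measure_univ]
    simpa using tsum_measure_le_measure_univ (μ := ν)
      (fun a => (measurableSet_singleton a).nullMeasurableSet)
      fun a b hab => (Set.disjoint_singleton.2 hab).aedisjoint
  exact ⟨hξ, Measure.ext_of_singleton fun a => by
    rw [Measure.map_apply_of_aemeasurable hξ (measurableSet_singleton a), h]⟩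

variable {p : unitInterval}

theorem one_sub_mul_integral_add_one_geometricMeasure (hp : p ≠ 0) {f : ℕ → ℝ} (hf : f 0 = 0) :
    (1 - p) * ∫ n, f (n + 1) ∂geometricMeasure p = ∫ n, f n ∂geometricMeasure p := by
  rw [integral_geometricMeasure hp, integral_geometricMeasure hp, ← tsum_mul_left]
  refine tsum_eq_tsum_of_hasSum_iff_hasSum fun {a} => ?_
  rw [← hasSum_nat_add_iff' 1 (f := fun n => ((1 - p : ℝ) ^ n * p) • f n)]
  simp only [smul_eq_mul, Finset.range_one, Finset.sum_singleton, hf, mul_zero, sub_zero, pow_succ]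
  congr! 2 with n
  ring

theorem integral_natCast_geometricMeasure (hp : p ≠ 0) :
    ∫ n : ℕ, (n : ℝ) ∂geometricMeasure p = (1 - p) / p := by
  have hp_pos : (0 : ℝ) < p := unitInterval.pos_iff_ne_zero.2 hp
  have hq : ‖(1 - p : ℝ)‖ < 1 := by
    rw [Real.norm_of_nonneg (by grind)]
    linarith
  calc ∫ n : ℕ, (n : ℝ) ∂geometricMeasure p = ∑' n : ℕ, n * (1 - p : ℝ) ^ n * p := by
        rw [integral_geometricMeasure hp]
        exact tsum_congr fun n => by rw [smul_eq_mul]; ring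
    _ = (1 - p) / p := by
        rw [tsum_mul_right, tsum_coe_mul_geometric_of_norm_lt_one hq, sub_sub_cancel]
        field_simp

theorem integral_pow_geometricMeasure_pos (hp₀ : p ≠ 0) (hp₁ : p ≠ 1) (k : ℕ) :
    0 < ∫ n : ℕ, (n : ℝ) ^ k ∂geometricMeasure p := by
  have hp_pos : (0 : ℝ) < p := unitInterval.pos_iff_ne_zero.2 hp₀
  have hq : (0 : ℝ) < 1 - p := sub_pos.2 (unitInterval.lt_one_iff_ne_one.2 hp₁)
  have hsum : Summable fun n : ℕ => (n : ℝ) ^ k * (1 - p : ℝ) ^ n :=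
    summable_pow_mul_geometric_of_norm_lt_one k (by rw [Real.norm_of_nonneg hq.le]; linarith)
  rw [integral_geometricMeasure hp₀]
  refine Summable.tsum_pos ((hsum.mul_right (p : ℝ)).congr fun n => ?_) (fun n => by positivity) 1
    (by simp [hp_pos, hq])
  rw [smul_eq_mul]
  ring

end ProbabilityTheory

theorem stmt_8 {Ω : Type*} [MeasureSpace Ω] (ℙ : Measure Ω) [IsProbabilityMeasure ℙ]
    (p : ℝ) (hp : p ∈ Set.Ioo (0 : ℝ) 1) (ξ : Ω → ℕ)
    (hξ : ∀ i : ℕ, ℙ {ω | ξ ω = i} = ENNReal.ofReal ((1 - p) ^ i * p))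
    (k : ℕ) (hk : 1 ≤ k) :
    (∫ ω, ((ξ ω : ℝ) + 1) ^ k ∂ℙ) / (∫ ω, (ξ ω : ℝ) ^ k ∂ℙ)
        = (1 + ∫ ω, (ξ ω : ℝ) ∂ℙ) / (∫ ω, (ξ ω : ℝ) ∂ℙ) ∧
    (∫ ω, (ξ ω : ℝ) ∂ℙ) = (1 - p) / p := by
  set q : unitInterval := ⟨p, hp.1.le, hp.2.le⟩
  have hq₀ : q ≠ 0 := fun h => hp.1.ne' (congrArg Subtype.val h)
  have hq₁ : q ≠ 1 := fun h => hp.2.ne (congrArg Subtype.val h)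
  -- Names stay qualified: opening `ProbabilityTheory` would make `ℙ` the notation for `volume`.
  have hlaw : ProbabilityTheory.HasLaw ξ (ProbabilityTheory.geometricMeasure q) ℙ :=
    ProbabilityTheory.hasLaw_of_measure_fiber_eq fun i =>
      (hξ i).trans (ProbabilityTheory.geometricMeasure_singleton hq₀ i).symm
  have hE (g : ℕ → ℝ) : ∫ ω, g (ξ ω) ∂ℙ = ∫ n, g n ∂ProbabilityTheory.geometricMeasure q :=
    hlaw.integral_comp .of_discrete
  have hmean : ∫ ω, (ξ ω : ℝ) ∂ℙ = (1 - p) / p :=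
    (hE _).trans (ProbabilityTheory.integral_natCast_geometricMeasure hq₀)
  have hshift : (1 - p) * ∫ ω, ((ξ ω : ℝ) + 1) ^ k ∂ℙ = ∫ ω, (ξ ω : ℝ) ^ k ∂ℙ := by
    rw [hE fun n => ((n : ℝ) + 1) ^ k, hE fun n => (n : ℝ) ^ k]
    exact_mod_cast ProbabilityTheory.one_sub_mul_integral_add_one_geometricMeasure hq₀
      (f := fun n => (n : ℝ) ^ k) (by simpa using Nat.one_le_iff_ne_zero.1 hk)
  have hpos : 0 < ∫ ω, (ξ ω : ℝ) ^ k ∂ℙ :=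
    (hE fun n => (n : ℝ) ^ k) ▸ ProbabilityTheory.integral_pow_geometricMeasure_pos hq₀ hq₁ k
  have hA : ∫ ω, ((ξ ω : ℝ) + 1) ^ k ∂ℙ ≠ 0 := right_ne_zero_of_mul (hshift.trans_ne hpos.ne')
  refine ⟨?_, hmean⟩
  rw [← hshift, div_mul_cancel_right₀ hA, hmean]
  field_simp [hp.1.ne', sub_ne_zero.2 hp.2.ne']
  ring
end

section
/- Fix d ≥ 3 and reals a, b with b > a > 0. For integers j > i ≥ 1 one has 1 < ((j + a/b)^{2−d} − i^{2−d}) / (j^{2−d} − i^{2−d}) < 1 + a/(b(j−i)). -/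
open Real

theorem stmt_17 (d : ℕ) (hd : 3 ≤ d) (a b : ℝ) (ha : 0 < a) (hab : a < b)
    (i j : ℕ) (hi : 1 ≤ i) (hij : i < j) :
    1 < (((j : ℝ) + a / b) ^ ((2 : ℝ) - d) - (i : ℝ) ^ ((2 : ℝ) - d))
          / ((j : ℝ) ^ ((2 : ℝ) - d) - (i : ℝ) ^ ((2 : ℝ) - d)) ∧
    (((j : ℝ) + a / b) ^ ((2 : ℝ) - d) - (i : ℝ) ^ ((2 : ℝ) - d))
          / ((j : ℝ) ^ ((2 : ℝ) - d) - (i : ℝ) ^ ((2 : ℝ) - d))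
        < 1 + a / (b * ((j : ℝ) - i)) := by
  have hb : 0 < b := ha.trans hab
  have ht : 0 < a / b := div_pos ha hb
  have hI : (0 : ℝ) < (i : ℝ) := by exact_mod_cast hi
  have hIJ : (i : ℝ) < (j : ℝ) := by exact_mod_cast hij
  have hJ : (0 : ℝ) < (j : ℝ) := hI.trans hIJ
  have hJt : (0 : ℝ) < (j : ℝ) + a / b := by linarith
  -- rewrite rpow as zpow
  set m : ℤ := 2 - (d : ℤ) with hm
  have hcast : ((2 : ℝ) - d) = ((m : ℤ) : ℝ) := by push_cast [hm]; ring
  have hrw : ∀ x : ℝ, 0 < x → x ^ ((2 : ℝ) - d) = x ^ m := by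
    intro x hx
    rw [hcast, Real.rpow_intCast]
  rw [hrw _ hI, hrw _ hJ, hrw _ hJt]
  set f : ℝ → ℝ := fun x : ℝ => x ^ m with hf
  have hconv : StrictConvexOn ℝ (Set.Ioi 0) f :=
    strictConvexOn_zpow (by omega) (by omega)
  -- f is strictly decreasing on positives: f J < f I and f (J+t) < f J
  have hanti : ∀ x y : ℝ, 0 < x → x < y → f y < f x := by
    intro x y hx hxy
    have hy : 0 < y := hx.trans hxy
    have hmn : m = -((d - 2 : ℕ) : ℤ) := by push_cast [hm]; omega
    simp only [hf, hmn, zpow_neg, zpow_natCast]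
    have hp : x ^ (d - 2) < y ^ (d - 2) := by
      apply pow_lt_pow_left₀ hxy hx.le
      omega
    exact inv_strictAnti₀ (by positivity) hp
  have hDneg : f (j : ℝ) - f (i : ℝ) < 0 :=
    sub_neg.2 (hanti _ _ hI hIJ)
  have hNlt : f ((j : ℝ) + a / b) < f (j : ℝ) :=
    hanti _ _ hJ (by linarith)
  constructor
  · rw [one_lt_div_of_neg hDneg]
    linarith
  · -- slope inequality
    have hslope := hconv.slope_strict_mono_adjacent (Set.mem_Ioi.2 hI)
      (Set.mem_Ioi.2 hJt) hIJ (by linarith)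
    -- hslope : (f J - f I)/(J - I) < (f (J+t) - f J)/((J+t) - J)
    have hJI : (0 : ℝ) < (j : ℝ) - i := by linarith
    rw [add_sub_cancel_left] at hslope
    have key : (a / b) * ((f (j : ℝ) - f (i : ℝ)) / ((j : ℝ) - i))
        < f ((j : ℝ) + a / b) - f (j : ℝ) := by
      have := mul_lt_mul_of_pos_left hslope ht
      rwa [mul_div_cancel₀ _ (ne_of_gt ht)] at this
    rw [div_lt_iff_of_neg hDneg]
    have ha' : a / (b * ((j : ℝ) - i)) = (a / b) / ((j : ℝ) - i) := by
      rw [div_div]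
    rw [ha']
    have hexp : (1 + (a / b) / ((j : ℝ) - i)) * (f (j : ℝ) - f (i : ℝ))
        = (f (j : ℝ) - f (i : ℝ)) + (a / b) * ((f (j : ℝ) - f (i : ℝ)) / ((j : ℝ) - i)) := by
      field_simp
    rw [hexp]
    linarith
end
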